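/- arXiv:1403.1488 — 2 statements merged into one kernel-verified Lean document; each statement's English description precedes it below -/
import Mathlib

section
/- For all x, y in ℝ³ with x ≠ y, one has 1/|x−y| = ∫_{ℝ³} ∫₀^∞ (1/(π r⁵)) X_{r,z}(x) X_{r,z}(y) dr dz, where X_{r,z}(x) = 1 if |x−z| ≤ r and 0 otherwise. -/
open MeasureTheory

/-- The indicator function `X_{r,z}` of the closed ball of radius `r` centered at `z` in `ℝ³`. -/
noncomputable def ballIndicator (r : ℝ) (z x : EuclideanSpace ℝ (Fin 3)) : ℝ :=
  if dist x z ≤ r then 1 else 0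

/-!
Integrating in `r` first, `X_{r,z}(x) X_{r,z}(y)` is the indicator of `r ≥ m(z)`, where
`m(z) = max (|x - z|, |y - z|)`, so the inner integral equals `1 / (4π m(z)⁴)`.
Since isometries of Euclidean spaces preserve volume, `∫ m⁻⁴` depends only on `|x - y| = 2a`,
and we may put `x, y` at `(±a, 0)` in `ℝ × ℝ²`, where `m(t, v)² = (|t| + a)² + |v|²`.
Polar coordinates on `ℝ²` give `∫ m⁻⁴ dv = π / (|t| + a)²`, whose integral over `t ∈ ℝ` is
`2π / a = 4π / |x - y|`.
-/

open Set Filter Topology Metric Module Real WithLp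
open scoped ENNReal

section TwoPoints

variable {E F : Type*} [NormedAddCommGroup E] [InnerProductSpace ℝ E] [FiniteDimensional ℝ E]
  [MeasurableSpace E] [BorelSpace E] [NormedAddCommGroup F] [InnerProductSpace ℝ F]
  [FiniteDimensional ℝ F] [MeasurableSpace F] [BorelSpace F]

theorem exists_measurePreserving_isometryEquiv_map_pair (hEF : finrank ℝ E = finrank ℝ F)
    {x y : E} {x' y' : F} (h : dist x y = dist x' y') :
    ∃ φ : E ≃ᵢ F, MeasurePreserving φ ∧ φ x = x' ∧ φ y = y' := by
  set L₀ : E ≃ₗᵢ[ℝ] F :=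
    (stdOrthonormalBasis ℝ E).equiv (stdOrthonormalBasis ℝ F) (finCongr hEF)
  have hnorm : ‖L₀ (y - x)‖ = ‖y' - x'‖ := by
    rwa [L₀.norm_map, ← dist_eq_norm', ← dist_eq_norm']
  set L := L₀.trans (Submodule.reflection (ℝ ∙ (L₀ (y - x) - (y' - x')))ᗮ)
  have hL : L (y - x) = y' - x' := Submodule.reflection_sub hnorm
  refine ⟨((IsometryEquiv.subRight x).trans L.toIsometryEquiv).trans (IsometryEquiv.addLeft x'),
    ?_, by simp, by simp [hL]⟩
  exact (measurePreserving_add_left volume x').comp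
    (L.measurePreserving.comp (measurePreserving_sub_right volume x))

theorem lintegral_dist_dist_congr (hEF : finrank ℝ E = finrank ℝ F) {x y : E} {x' y' : F}
    (h : dist x y = dist x' y') (G : ℝ → ℝ → ℝ≥0∞) :
    ∫⁻ z, G (dist x z) (dist y z) = ∫⁻ w, G (dist x' w) (dist y' w) := by
  obtain ⟨φ, hφ, rfl, rfl⟩ := exists_measurePreserving_isometryEquiv_map_pair hEF h
  rw [← hφ.lintegral_comp_emb φ.toHomeomorph.measurableEmbedding]
  simp only [IsometryEquiv.dist_eq]

end TwoPoints

theorem lintegral_withLp_prod {U V : Type*} [NormedAddCommGroup U] [InnerProductSpace ℝ U]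
    [FiniteDimensional ℝ U] [MeasurableSpace U] [BorelSpace U] [NormedAddCommGroup V]
    [InnerProductSpace ℝ V] [FiniteDimensional ℝ V] [MeasurableSpace V] [BorelSpace V]
    {f : WithLp 2 (U × V) → ℝ≥0∞} (hf : Measurable f) :
    ∫⁻ w, f w = ∫⁻ u, ∫⁻ v, f (toLp 2 (u, v)) := by
  rw [← (volume_preserving_toLp U V).lintegral_comp_emb
      (MeasurableEquiv.toLp 2 (U × V)).measurableEmbedding, Measure.volume_eq_prod]
  exact lintegral_prod _ (hf.comp (MeasurableEquiv.toLp 2 (U × V)).measurable).aemeasurable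

theorem lintegral_ofReal_fun_norm_addHaar {E : Type*} [NormedAddCommGroup E] [NormedSpace ℝ E]
    [Nontrivial E] [FiniteDimensional ℝ E] [MeasurableSpace E] [BorelSpace E] (μ : Measure E)
    [μ.IsAddHaarMeasure] {f : ℝ → ℝ} (hf : ∀ y, 0 ≤ y → 0 ≤ f y)
    (hint : IntegrableOn (fun y ↦ y ^ (finrank ℝ E - 1) * f y) (Ioi 0)) :
    ∫⁻ x, ENNReal.ofReal (f ‖x‖) ∂μ = ENNReal.ofReal
      (finrank ℝ E * μ.real (ball 0 1) * ∫ y in Ioi 0, y ^ (finrank ℝ E - 1) * f y) := by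
  rw [← ofReal_integral_eq_lintegral_ofReal ((integrable_fun_norm_addHaar μ).2 hint)
    (ae_of_all _ fun x ↦ hf _ (norm_nonneg x)), integral_fun_norm_addHaar]
  simp [nsmul_eq_mul, smul_eq_mul, mul_assoc]

theorem integrableOn_and_integral_Ioi_mul_inv_add_sq_sq {c : ℝ} (hc : 0 < c) :
    IntegrableOn (fun y ↦ y * ((c + y ^ 2) ^ 2)⁻¹) (Ioi 0) ∧
      ∫ y in Ioi 0, y * ((c + y ^ 2) ^ 2)⁻¹ = (2 * c)⁻¹ := by
  have hderiv : ∀ y ∈ Ici (0 : ℝ),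
      HasDerivAt (fun y ↦ -(2 * (c + y ^ 2))⁻¹) (y * ((c + y ^ 2) ^ 2)⁻¹) y := by
    intro y _
    have hpos : 0 < c + y ^ 2 := by positivity
    refine (HasDerivAt.inv (((hasDerivAt_pow 2 y).const_add c).const_mul 2)
      (by positivity)).neg.congr_deriv ?_
    field_simp
    ring
  have hlim : Tendsto (fun y : ℝ ↦ -(2 * (c + y ^ 2))⁻¹) atTop (𝓝 0) := by
    have h : Tendsto (fun y : ℝ ↦ 2 * (c + y ^ 2)) atTop atTop :=
      (tendsto_atTop_add_const_left _ c (tendsto_pow_atTop two_ne_zero)).const_mul_atTop two_pos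
    simpa using h.inv_tendsto_atTop.neg
  have hnonneg : ∀ y ∈ Ioi (0 : ℝ), 0 ≤ y * ((c + y ^ 2) ^ 2)⁻¹ :=
    fun y hy ↦ by have := hy.out.le; positivity
  refine ⟨integrableOn_Ioi_deriv_of_nonneg' hderiv hnonneg hlim, ?_⟩
  rw [integral_Ioi_of_hasDerivAt_of_nonneg' hderiv hnonneg hlim]
  simp

theorem integrableOn_and_integral_Ioi_div_add_sq {a c : ℝ} (ha : 0 < a) (hc : 0 ≤ c) :
    IntegrableOn (fun y ↦ c / (y + a) ^ 2) (Ioi 0) ∧ ∫ y in Ioi 0, c / (y + a) ^ 2 = c / a := by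
  have hderiv : ∀ y ∈ Ici (0 : ℝ), HasDerivAt (fun y ↦ -(c * (y + a)⁻¹)) (c / (y + a) ^ 2) y := by
    intro y hy
    have hpos : 0 < y + a := by have := hy.out; positivity
    refine ((HasDerivAt.inv ((hasDerivAt_id' y).add_const a) hpos.ne').const_mul c).neg
      |>.congr_deriv ?_
    field_simp
  have hlim : Tendsto (fun y : ℝ ↦ -(c * (y + a)⁻¹)) atTop (𝓝 0) := by
    simpa using ((tendsto_atTop_add_const_right _ a tendsto_id).inv_tendsto_atTop.const_mul c).neg
  have hnonneg : ∀ y ∈ Ioi (0 : ℝ), 0 ≤ c / (y + a) ^ 2 := fun y _ ↦ by positivity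
  refine ⟨integrableOn_Ioi_deriv_of_nonneg' hderiv hnonneg hlim, ?_⟩
  rw [integral_Ioi_of_hasDerivAt_of_nonneg' hderiv hnonneg hlim]
  simp [div_eq_mul_inv]

theorem lintegral_inv_add_norm_sq_sq {V : Type*} [NormedAddCommGroup V] [InnerProductSpace ℝ V]
    [FiniteDimensional ℝ V] [MeasurableSpace V] [BorelSpace V] (hV : finrank ℝ V = 2) {c : ℝ}
    (hc : 0 < c) : ∫⁻ v : V, ENNReal.ofReal (((c + ‖v‖ ^ 2) ^ 2)⁻¹) = ENNReal.ofReal (π / c) := by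
  have : Nontrivial V := Module.nontrivial_of_finrank_eq_succ hV
  have hball : volume.real (ball (0 : V) 1) = π := by
    simp [measureReal_def, InnerProductSpace.volume_ball_of_dim_even (k := 1) hV, pi_nonneg]
  have hint := integrableOn_and_integral_Ioi_mul_inv_add_sq_sq hc
  rw [lintegral_ofReal_fun_norm_addHaar (f := fun y ↦ ((c + y ^ 2) ^ 2)⁻¹) volume
    (fun y _ ↦ by positivity) (by simpa [hV] using hint.1)]
  simp only [hV, hball, Nat.reduceSub, pow_one, hint.2, Nat.cast_ofNat]
  congr 1
  field_simp

theorem lintegral_div_abs_add_sq {a c : ℝ} (ha : 0 < a) (hc : 0 ≤ c) :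
    ∫⁻ t : ℝ, ENNReal.ofReal (c / (|t| + a) ^ 2) = ENNReal.ofReal (2 * c / a) := by
  have hint := integrableOn_and_integral_Ioi_div_add_sq ha hc
  simp_rw [← Real.norm_eq_abs]
  rw [lintegral_ofReal_fun_norm_addHaar (f := fun y ↦ c / (y + a) ^ 2) volume
    (fun y _ ↦ by positivity) (by simpa using hint.1)]
  congr 1
  simp [Real.volume_ball, measureReal_def, hint.2]
  ring

theorem max_dist_toLp_neg_pair {V : Type*} [SeminormedAddCommGroup V] {a : ℝ} (ha : 0 ≤ a)
    (t : ℝ) (v : V) :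
    max (dist (toLp 2 (a, (0 : V))) (toLp 2 (t, v))) (dist (toLp 2 (-a, (0 : V))) (toLp 2 (t, v))) =
      √((|t| + a) ^ 2 + ‖v‖ ^ 2) := by
  have hmax : max ((a - t) ^ 2) ((-a - t) ^ 2) = (|t| + a) ^ 2 := by
    rcases le_total 0 t with ht | ht
    · rw [abs_of_nonneg ht, max_eq_right (by nlinarith)]; ring
    · rw [abs_of_nonpos ht, max_eq_left (by nlinarith)]; ring
  simp only [prod_dist_eq_of_L2, toLp_fst, toLp_snd, Real.dist_eq, sq_abs, dist_zero_left]
  rw [← Real.sqrt_monotone.map_max, max_add_add_right, hmax]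

theorem dist_toLp_neg_pair {V : Type*} [SeminormedAddCommGroup V] {a : ℝ} (ha : 0 ≤ a) :
    dist (toLp 2 (a, (0 : V))) (toLp 2 (-a, (0 : V))) = 2 * a := by
  simp only [prod_dist_eq_of_L2, toLp_fst, toLp_snd, Real.dist_eq, dist_self, sub_neg_eq_add,
    sq_abs]
  rw [zero_pow two_ne_zero, add_zero, Real.sqrt_sq (by positivity)]
  ring

theorem max_dist_pos_of_ne {X : Type*} [MetricSpace X] {x y : X} (hxy : x ≠ y) (z : X) :
    0 < max (dist x z) (dist y z) := by
  rcases eq_or_ne x z with rfl | hxz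
  · exact lt_max_of_lt_right (dist_pos.2 hxy.symm)
  · exact lt_max_of_lt_left (dist_pos.2 hxz)

local notation "ℝ³" => EuclideanSpace ℝ (Fin 3)

theorem mul_ballIndicator_mul_ballIndicator (f : ℝ → ℝ) (r : ℝ) (z x y : ℝ³) :
    f r * ballIndicator r z x * ballIndicator r z y =
      (Ici (max (dist x z) (dist y z))).indicator f r := by
  simp only [ballIndicator, indicator, mem_Ici, max_le_iff]
  split_ifs <;> simp_all

theorem setIntegral_ballIndicator_mul_ballIndicator {x y : ℝ³} (hxy : x ≠ y) (z : ℝ³) :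
    ∫ r in Ioi 0, 1 / (π * r ^ 5) * ballIndicator r z x * ballIndicator r z y =
      (4 * π * max (dist x z) (dist y z) ^ 4)⁻¹ := by
  set m := max (dist x z) (dist y z)
  have hm : 0 < m := max_dist_pos_of_ne hxy z
  have hderiv : ∀ r ∈ Ici m, HasDerivAt (fun r ↦ -(4 * π * r ^ 4)⁻¹) (1 / (π * r ^ 5)) r := by
    intro r hr
    have hr0 : 0 < r := hm.trans_le hr
    refine (HasDerivAt.inv ((hasDerivAt_pow 4 r).const_mul (4 * π))
      (by positivity)).neg.congr_deriv ?_
    field_simp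
    ring
  have hlim : Tendsto (fun r : ℝ ↦ -(4 * π * r ^ 4)⁻¹) atTop (𝓝 0) := by
    simpa using ((tendsto_pow_atTop four_ne_zero).const_mul_atTop (by positivity : 0 < 4 * π)
      |>.inv_tendsto_atTop).neg
  have hnonneg : ∀ r ∈ Ioi m, 0 ≤ 1 / (π * r ^ 5) := fun r hr ↦ by
    have : 0 < r := hm.trans hr
    positivity
  simp_rw [mul_ballIndicator_mul_ballIndicator (fun r ↦ 1 / (π * r ^ 5))]
  rw [integral_indicator measurableSet_Ici, Measure.restrict_restrict measurableSet_Ici,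
    inter_eq_left.2 (Ici_subset_Ioi.2 hm), integral_Ici_eq_integral_Ioi,
    integral_Ioi_of_hasDerivAt_of_nonneg' hderiv hnonneg hlim]
  simp

theorem lintegral_inv_max_dist_pow_four {x y : ℝ³} (hxy : x ≠ y) :
    ∫⁻ z, ENNReal.ofReal ((max (dist x z) (dist y z) ^ 4)⁻¹) =
      ENNReal.ofReal (4 * π / dist x y) := by
  set a := dist x y / 2
  have ha : 0 < a := half_pos (dist_pos.2 hxy)
  have hdim : finrank ℝ ℝ³ = finrank ℝ (WithLp 2 (ℝ × EuclideanSpace ℝ (Fin 2))) := by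
    rw [(WithLp.linearEquiv 2 ℝ (ℝ × EuclideanSpace ℝ (Fin 2))).finrank_eq]
    simp
  have hdist : dist x y = dist (toLp 2 (a, (0 : EuclideanSpace ℝ (Fin 2)))) (toLp 2 (-a, 0)) := by
    rw [dist_toLp_neg_pair ha.le]
    ring
  have hcoord : ∀ (t : ℝ) (v : EuclideanSpace ℝ (Fin 2)),
      max (dist (toLp 2 (a, 0)) (toLp 2 (t, v))) (dist (toLp 2 (-a, 0)) (toLp 2 (t, v))) ^ 4 =
        ((|t| + a) ^ 2 + ‖v‖ ^ 2) ^ 2 := by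
    intro t v
    rw [max_dist_toLp_neg_pair ha.le, show 4 = 2 * 2 from rfl, pow_mul,
      Real.sq_sqrt (by positivity)]
  have hslice : ∀ t : ℝ, ∫⁻ v : EuclideanSpace ℝ (Fin 2),
      ENNReal.ofReal ((((|t| + a) ^ 2 + ‖v‖ ^ 2) ^ 2)⁻¹) = ENNReal.ofReal (π / (|t| + a) ^ 2) :=
    fun t ↦ lintegral_inv_add_norm_sq_sq finrank_euclideanSpace_fin (by positivity)
  rw [lintegral_dist_dist_congr hdim hdist (fun r s ↦ ENNReal.ofReal ((max r s ^ 4)⁻¹)),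
    lintegral_withLp_prod (by fun_prop)]
  simp_rw [hcoord, hslice]
  rw [lintegral_div_abs_add_sq ha pi_nonneg, hdist, dist_toLp_neg_pair ha.le]
  congr 1
  field_simp
  ring

theorem integral_inv_max_dist_pow_four {x y : ℝ³} (hxy : x ≠ y) :
    ∫ z, (max (dist x z) (dist y z) ^ 4)⁻¹ = 4 * π / dist x y := by
  rw [integral_eq_lintegral_of_nonneg_ae (ae_of_all _ fun z ↦ by positivity)
      (by fun_prop : Measurable _).aestronglyMeasurable,
    lintegral_inv_max_dist_pow_four hxy, ENNReal.toReal_ofReal (by positivity)]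

/-- **Fefferman–de la Llave decomposition, translated form.**
For all `x ≠ y` in `ℝ³`,
`1/|x−y| = ∫_{ℝ³} ∫₀^∞ (1/(π r⁵)) X_{r,z}(x) X_{r,z}(y) dr dz`. -/
theorem fefferman_de_la_llave' (x y : EuclideanSpace ℝ (Fin 3)) (hxy : x ≠ y) :
    1 / ‖x - y‖ =
      ∫ z : EuclideanSpace ℝ (Fin 3),
        ∫ r in Set.Ioi (0 : ℝ),
          1 / (Real.pi * r ^ 5) * ballIndicator r z x * ballIndicator r z y := by
  simp_rw [setIntegral_ballIndicator_mul_ballIndicator hxy, mul_inv, integral_const_mul,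
    integral_inv_max_dist_pow_four hxy, ← dist_eq_norm]
  have hd : 0 < dist x y := dist_pos.2 hxy
  field_simp
end

section
/- Let γ and p be trace-class operators with 0 ≤ γ ≤ 1, p an orthogonal projection of rank N, and Tr γ = Tr p = N. Then the trace norm satisfies ‖γ − p‖_{tr} ≤ 2√N ‖γ − p‖_{HS}, where ‖·‖_{HS} is the Hilbert–Schmidt norm. -/
/-!
Write `μ i = re ⟪e i, γ (e i)⟫ - ‖p (e i)‖²`. If `|μ|` is summable, so is `‖p (e i)‖²`, which
forces `p` to have finite rank, and then `∑ ‖p (e i)‖² = rank p = N = Tr γ`; hence `∑ μ i = 0`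
and `∑ |μ i| = 2 ∑ (μ i)⁻`. On the span of the `e i` with `μ i < 0` the form of `γ - p` is negative
definite while `γ ≥ 0`, so `p` is injective there and at most `N` of the `μ i` are negative;
Cauchy–Schwarz over them gives the bound. If `|μ|` is not summable, `∑' i, |μ i|` is `0` by
convention.
-/

open scoped InnerProductSpace
open RCLike Module

section Real

variable {ι : Type*}

theorem tsum_abs_eq_two_mul_tsum_negPart {μ : ι → ℝ} (hμ : HasSum μ 0) :
    ∑' i, |μ i| = 2 * ∑' i, (μ i)⁻ := by
  have hneg : Summable fun i => (μ i)⁻ :=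
    hμ.summable.abs.of_nonneg_of_le (fun i => negPart_nonneg _) fun i => by
      rw [← posPart_add_negPart]; exact le_add_of_nonneg_left (posPart_nonneg _)
  calc ∑' i, |μ i| = ∑' i, (μ i + 2 * (μ i)⁻) := tsum_congr fun i => by
        rw [← posPart_add_negPart]; linarith [posPart_sub_negPart (μ i)]
    _ = 2 * ∑' i, (μ i)⁻ := by
        rw [hμ.summable.tsum_add (hneg.mul_left 2), hμ.tsum_eq, tsum_mul_left, zero_add]

theorem Finset.sum_le_sqrt_card_mul_sqrt_sum_sq (s : Finset ι) (f : ι → ℝ) :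
    ∑ i ∈ s, f i ≤ √s.card * √(∑ i ∈ s, f i ^ 2) := by
  rw [← Real.sqrt_mul (Nat.cast_nonneg _)]
  refine Real.le_sqrt_of_sq_le ?_
  simpa using Finset.sum_mul_sq_le_sq_mul_sq s (fun _ => (1 : ℝ)) f

theorem tsum_abs_le_two_sqrt_mul_sqrt_tsum_sq {μ : ι → ℝ} {N : ℕ} (hμ : HasSum μ 0)
    (hneg : ∀ s : Finset ι, (∀ i ∈ s, μ i < 0) → s.card ≤ N) :
    ∑' i, |μ i| ≤ 2 * √N * √(∑' i, μ i ^ 2) := by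
  have hfin : {i | μ i < 0}.Finite := by
    by_contra hinf
    obtain ⟨s, hs, hcard⟩ := Set.Infinite.exists_subset_card_eq hinf (N + 1)
    have := hneg s fun i hi => hs hi
    omega
  set K := hfin.toFinset
  have hK : ∀ i ∈ K, μ i < 0 := fun i hi => hfin.mem_toFinset.mp hi
  have hsq : Summable fun i => μ i ^ 2 := by
    have habs := hμ.summable.abs
    refine (habs.mul_left (∑' i, |μ i|)).of_nonneg_of_le (fun i => sq_nonneg _) fun i => ?_
    rw [← sq_abs, sq]
    exact mul_le_mul_of_nonneg_right (habs.le_tsum i fun j _ => abs_nonneg _) (abs_nonneg _)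
  calc ∑' i, |μ i| = 2 * ∑ i ∈ K, (μ i)⁻ := by
        rw [tsum_abs_eq_two_mul_tsum_negPart hμ, tsum_eq_sum fun i hi => ?_]
        exact negPart_eq_zero.mpr (not_lt.mp fun h => hi (hfin.mem_toFinset.mpr h))
    _ ≤ 2 * (√K.card * √(∑ i ∈ K, ((μ i)⁻) ^ 2)) := by
        gcongr; exact K.sum_le_sqrt_card_mul_sqrt_sum_sq _
    _ ≤ 2 * (√N * √(∑' i, μ i ^ 2)) := by
        gcongr
        · exact hneg K hK
        · calc ∑ i ∈ K, ((μ i)⁻) ^ 2 = ∑ i ∈ K, μ i ^ 2 :=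
                Finset.sum_congr rfl fun i hi => by rw [negPart_eq_neg.mpr (hK i hi).le, neg_sq]
            _ ≤ ∑' i, μ i ^ 2 := hsq.sum_le_tsum K fun i _ => sq_nonneg _
    _ = 2 * √N * √(∑' i, μ i ^ 2) := by ring

end Real

section InnerProductSpace

variable {𝕜 E ι : Type*} [RCLike 𝕜] [NormedAddCommGroup E] [InnerProductSpace 𝕜 E]

theorem HilbertBasis.hasSum_norm_inner_sq (e : HilbertBasis ι 𝕜 E) (x : E) :
    HasSum (fun i => ‖⟪x, e i⟫_𝕜‖ ^ 2) (‖x‖ ^ 2) := by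
  have := (e.hasSum_inner_mul_inner x x).mapL (reCLM : 𝕜 →L[ℝ] ℝ)
  simp only [reCLM_apply, ← inner_conj_symm x (e _), RCLike.conj_mul, ← ofReal_pow, ofReal_re,
    inner_self_eq_norm_sq] at this
  exact this.congr_fun fun i => by rw [norm_inner_symm]

theorem HilbertBasis.hasSum_sum_norm_inner_sq (e : HilbertBasis ι 𝕜 E) {κ : Type*} [Fintype κ]
    {u : κ → E} (hu : Orthonormal 𝕜 u) :
    HasSum (fun i => ∑ j, ‖⟪u j, e i⟫_𝕜‖ ^ 2) (Fintype.card κ) := by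
  simpa [hu.1] using hasSum_sum fun j (_ : j ∈ Finset.univ) => e.hasSum_norm_inner_sq (u j)

namespace Submodule

variable (K : Submodule 𝕜 E) [K.HasOrthogonalProjection]

theorem re_inner_starProjection_self_eq_norm_sq (x : E) :
    re ⟪x, K.starProjection x⟫_𝕜 = ‖K.starProjection x‖ ^ 2 := by
  rw [← inner_starProjection_left_eq_right, re_inner_starProjection_eq_normSq, starProjection_apply,
    norm_coe]

theorem sum_norm_inner_sq_le_norm_starProjection_sq {κ : Type*} [Fintype κ] {u : κ → E}
    (hu : Orthonormal 𝕜 u) (huK : ∀ j, u j ∈ K) (x : E) :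
    ∑ j, ‖⟪u j, x⟫_𝕜‖ ^ 2 ≤ ‖K.starProjection x‖ ^ 2 := by
  convert hu.sum_inner_products_le (s := Finset.univ) (K.starProjection x) using 4 with j
  rw [← inner_starProjection_left_eq_right, starProjection_eq_self_iff.mpr (huK j)]

theorem norm_starProjection_sq_eq_sum {κ : Type*} [Fintype κ] (b : OrthonormalBasis κ 𝕜 K)
    (x : E) : ‖K.starProjection x‖ ^ 2 = ∑ j, ‖⟪(b j : E), x⟫_𝕜‖ ^ 2 := by
  rw [starProjection_apply, norm_coe, ← b.sum_sq_norm_inner_right]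
  simp

end Submodule

theorem HilbertBasis.hasSum_norm_starProjection_sq (e : HilbertBasis ι 𝕜 E) (K : Submodule 𝕜 E)
    [FiniteDimensional 𝕜 K] :
    HasSum (fun i => ‖K.starProjection (e i)‖ ^ 2) (finrank 𝕜 K) := by
  let b := stdOrthonormalBasis 𝕜 K
  simpa [K.norm_starProjection_sq_eq_sum b] using
    e.hasSum_sum_norm_inner_sq (b.orthonormal.comp_linearIsometry K.subtypeₗᵢ)

/-- An infinite-dimensional `K` contains orthonormal families of every size `m`, and each one
contributes `m` to the sum. -/
theorem HilbertBasis.finiteDimensional_of_summable_norm_starProjection_sq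
    (e : HilbertBasis ι 𝕜 E) (K : Submodule 𝕜 E) [K.HasOrthogonalProjection]
    (h : Summable fun i => ‖K.starProjection (e i)‖ ^ 2) : FiniteDimensional 𝕜 K := by
  by_contra hK
  obtain ⟨m, hm⟩ := exists_nat_gt (∑' i, ‖K.starProjection (e i)‖ ^ 2)
  have hrank : (m : Cardinal) ≤ Module.rank 𝕜 K :=
    Cardinal.natCast_lt_aleph0.le.trans (not_lt.mp (mt Module.rank_lt_aleph0_iff.mp hK))
  obtain ⟨f, hf⟩ := exists_linearIndependent_of_le_rank hrank
  let v := InnerProductSpace.gramSchmidtNormed 𝕜 f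
  have hu : Orthonormal 𝕜 fun j => (v j : E) :=
    (InnerProductSpace.gramSchmidtNormed_orthonormal hf).comp_linearIsometry K.subtypeₗᵢ
  have hle := hasSum_le
    (fun i => K.sum_norm_inner_sq_le_norm_starProjection_sq hu (fun j => (v j).2) (e i))
    (e.hasSum_sum_norm_inner_sq hu) h.hasSum
  rw [Fintype.card_fin] at hle
  linarith

theorem re_inner_apply_self_eq_of_apply_eq_smul {A : E →L[𝕜] E} {x : E} (hx : ‖x‖ = 1) {c : ℝ}
    (h : A x = (c : 𝕜) • x) : re ⟪x, A x⟫_𝕜 = c := by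
  simp [h, inner_smul_right, inner_self_eq_norm_sq_to_K, hx]

theorem Orthonormal.re_inner_sum_smul_apply {e : ι → E} (he : Orthonormal 𝕜 e) {A : E →L[𝕜] E}
    {μ : ι → ℝ} (hA : ∀ i, A (e i) = (μ i : 𝕜) • e i) (s : Finset ι) (c : ι → 𝕜) :
    re ⟪∑ i ∈ s, c i • e i, A (∑ i ∈ s, c i • e i)⟫_𝕜 = ∑ i ∈ s, ‖c i‖ ^ 2 * μ i := by
  have hAx : A (∑ i ∈ s, c i • e i) = ∑ i ∈ s, (c i * μ i) • e i := by
    simp only [map_sum, map_smul, hA, smul_smul]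
  rw [hAx, he.inner_sum, map_sum]
  refine Finset.sum_congr rfl fun i _ => ?_
  rw [← mul_assoc, RCLike.conj_mul, ← ofReal_pow, ← ofReal_mul, ofReal_re]

/-- A vector `x = ∑ c j • e j` with `T x = 0` has `0 ≤ re ⟪x, γ x⟫ = re ⟪x, (γ - T) x⟫ ≤ 0`, and the
last form vanishes only for `c = 0`. -/
theorem linearIndependent_apply_of_sub_eigenvalue_neg {γ T : E →L[𝕜] E} (hγ : γ.IsPositive)
    {e : ι → E} (he : Orthonormal 𝕜 e) {μ : ι → ℝ}
    (heig : ∀ i, (γ - T) (e i) = (μ i : 𝕜) • e i) (hneg : ∀ i, μ i < 0) :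
    LinearIndependent 𝕜 fun i => T (e i) := by
  rw [linearIndependent_iff']
  intro s c hc i hi
  have hTx : T (∑ j ∈ s, c j • e j) = 0 := by simpa only [map_sum, map_smul] using hc
  have hterm : ∀ j ∈ s, ‖c j‖ ^ 2 * μ j ≤ 0 := fun j _ =>
    mul_nonpos_of_nonneg_of_nonpos (sq_nonneg _) (hneg j).le
  have hnonneg : 0 ≤ ∑ j ∈ s, ‖c j‖ ^ 2 * μ j := by
    rw [← he.re_inner_sum_smul_apply heig, sub_apply, hTx, sub_zero]
    exact hγ.re_inner_nonneg_right _
  have hci := (Finset.sum_eq_zero_iff_of_nonpos hterm).mp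
    (le_antisymm (Finset.sum_nonpos hterm) hnonneg) i hi
  simpa [(hneg i).ne] using hci

theorem card_le_finrank_range_of_sub_eigenvalue_neg {γ T : E →L[𝕜] E} (hγ : γ.IsPositive)
    [FiniteDimensional 𝕜 (LinearMap.range T.toLinearMap)]
    {e : ι → E} (he : Orthonormal 𝕜 e) {μ : ι → ℝ}
    (heig : ∀ i, (γ - T) (e i) = (μ i : 𝕜) • e i) (s : Finset ι) (hneg : ∀ i ∈ s, μ i < 0) :
    s.card ≤ finrank 𝕜 (LinearMap.range T.toLinearMap) := by
  have hli := linearIndependent_apply_of_sub_eigenvalue_neg hγ (he.comp _ Subtype.val_injective)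
    (fun i : s => heig i) fun i => hneg i i.2
  have : LinearIndependent 𝕜 fun i : s => T.toLinearMap.rangeRestrict (e i) :=
    LinearIndependent.of_comp (LinearMap.range T.toLinearMap).subtype hli
  simpa using this.fintype_card_le_finrank

end InnerProductSpace

theorem trace_norm_le_sqrtN_HS_general
    {H : Type*} [NormedAddCommGroup H] [InnerProductSpace ℂ H] [CompleteSpace H]
    {ι : Type*} (N : ℕ)
    (γ p : H →L[ℂ] H)
    (hγpos : γ.IsPositive)
    (hp : IsIdempotentElem p) (hpsa : IsSelfAdjoint p)
    (hrank : Module.finrank ℂ (LinearMap.range p.toLinearMap) = N)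
    (e : HilbertBasis ι ℂ H)
    (htrγ : HasSum (fun i => (inner ℂ (e i) (γ (e i)) : ℂ).re) (N : ℝ))
    (μ : ι → ℝ)
    (heig : ∀ i, (γ - p) (e i) = ((μ i : ℝ) : ℂ) • e i) :
    ∑' i, |μ i| ≤ 2 * Real.sqrt N * Real.sqrt (∑' i, μ i ^ 2) := by
  by_cases hsum : Summable fun i => |μ i|
  swap
  · rw [tsum_eq_zero_of_not_summable hsum]
    positivity
  obtain ⟨_, hpK⟩ := isStarProjection_iff_eq_starProjection_range.mp ⟨hp, hpsa⟩
  have hpx : ∀ x, re ⟪x, p x⟫_ℂ = ‖p x‖ ^ 2 := by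
    rw [hpK]
    exact Submodule.re_inner_starProjection_self_eq_norm_sq _
  have hμ : ∀ i, μ i = (inner ℂ (e i) (γ (e i)) : ℂ).re - ‖p (e i)‖ ^ 2 := fun i => by
    rw [← re_inner_apply_self_eq_of_apply_eq_smul (e.orthonormal.1 i) (heig i), ← hpx,
      sub_apply, inner_sub_right, map_sub]
    rfl
  have : FiniteDimensional ℂ (LinearMap.range p.toLinearMap) := by
    refine e.finiteDimensional_of_summable_norm_starProjection_sq _ ?_
    rw [← hpK]
    exact (htrγ.summable.sub hsum.of_abs).congr fun i => by rw [hμ]; ring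
  have hpN := e.hasSum_norm_starProjection_sq (LinearMap.range p.toLinearMap)
  rw [← hpK, hrank] at hpN
  refine tsum_abs_le_two_sqrt_mul_sqrt_tsum_sq ?_ fun s hs =>
    hrank ▸ card_le_finrank_range_of_sub_eigenvalue_neg hγpos e.orthonormal heig s hs
  simpa [← hμ] using htrγ.sub hpN

/-- **Trace-norm versus Hilbert–Schmidt norm bound.**
Let `γ` and `p` be trace-class operators with `0 ≤ γ ≤ 1`, `p` an orthogonal projection
of rank `N`, and `Tr γ = Tr p = N`.  Diagonalizing the compact self-adjoint operator
`γ − p` in a Hilbert basis `e` with eigenvalues `μ i`, the trace norm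
`‖γ − p‖_tr = Σ |μ i|` and Hilbert–Schmidt norm `‖γ − p‖_HS = (Σ μ i²)^{1/2}` satisfy
`‖γ − p‖_tr ≤ 2 √N ‖γ − p‖_HS`. -/
theorem trace_norm_le_sqrtN_HS
    {H : Type*} [NormedAddCommGroup H] [InnerProductSpace ℂ H] [CompleteSpace H]
    {ι : Type*} (N : ℕ)
    (γ p : H →L[ℂ] H)
    (hγpos : γ.IsPositive) (hγle : (1 - γ).IsPositive)
    (hp : IsIdempotentElem p) (hpsa : IsSelfAdjoint p)
    (hrank : Module.finrank ℂ (LinearMap.range p.toLinearMap) = N)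
    (e : HilbertBasis ι ℂ H)
    (htrγ : HasSum (fun i => (inner ℂ (e i) (γ (e i)) : ℂ).re) (N : ℝ))
    (μ : ι → ℝ)
    (heig : ∀ i, (γ - p) (e i) = ((μ i : ℝ) : ℂ) • e i) :
    ∑' i, |μ i| ≤ 2 * Real.sqrt N * Real.sqrt (∑' i, μ i ^ 2) :=
  trace_norm_le_sqrtN_HS_general N γ p hγpos hp hpsa hrank e htrγ μ heig
end
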